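/- In a finite simple graph G on n vertices, the total number of ordered 2-paths equals Σ_v deg(v)·(deg(v) − 1), and this is at most n(n−1) + 16·t where t is the number of 4-cycles of G. -/

import Mathlib

/-- A 4-cycle in a graph, viewed as a set of 4 distinct vertices that can be
arranged in a cycle. -/
def IsFourCycle {V : Type*} [DecidableEq V] (G : SimpleGraph V) (s : Finset V) : Prop :=
  ∃ a b c d : V, a ≠ b ∧ a ≠ c ∧ a ≠ d ∧ b ≠ c ∧ b ≠ d ∧ c ≠ d ∧
    s = {a, b, c, d} ∧ G.Adj a b ∧ G.Adj b c ∧ G.Adj c d ∧ G.Adj d a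

/-!
Counting an ordered 2-path `(u, w, v)` by its middle vertex gives `Σ_w deg w (deg w - 1)`, and
by its endpoints gives `Σ_{u ≠ v} x(u, v)`, where `x(u, v)` is the number of common neighbours.
Since `x ≤ 1 + C(x, 2)`, the sum is at most `n(n-1) + Σ_{u ≠ v} C(x(u, v), 2)`. A pair `(u, v)`
together with two common neighbours `{w, w'}` spans the 4-cycle `u w v w'`, and the vertex set
`{u, v, w, w'}` with the ordered pair `(u, v)` in it recovers `{w, w'}`; so the last sum is at most
`4 · 4 = 16` times the number of 4-cycles.
-/

open Finset

lemma Nat.le_one_add_choose_two (x : ℕ) : x ≤ 1 + x.choose 2 := by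
  rcases x with _ | _ | x
  · simp
  · simp
  · rw [Nat.choose_succ_succ, Nat.choose_one_right]
    omega

lemma IsFourCycle.card_eq_four {V : Type*} [DecidableEq V] {G : SimpleGraph V} {s : Finset V}
    (h : IsFourCycle G s) : #s = 4 := by
  obtain ⟨a, b, c, d, hab, hac, had, hbc, hbd, hcd, rfl, -⟩ := h
  rw [card_insert_of_notMem (by simp [hab, hac, had]), card_insert_of_notMem (by simp [hbc, hbd]),
    card_pair hcd]

namespace SimpleGraph

variable {V : Type*} [Fintype V] [DecidableEq V] (G : SimpleGraph V) [DecidableRel G.Adj]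

def commonNeighborFinset (u v : V) : Finset V :=
  G.neighborFinset u ∩ G.neighborFinset v

variable {G} in
@[simp]
lemma mem_commonNeighborFinset {u v w : V} :
    w ∈ G.commonNeighborFinset u v ↔ G.Adj u w ∧ G.Adj v w := by
  simp [commonNeighborFinset]

def orderedTwoPaths : Finset (V × V × V) :=
  {p | p.1 ≠ p.2.2 ∧ G.Adj p.2.1 p.1 ∧ G.Adj p.2.1 p.2.2}

lemma card_orderedTwoPaths_eq_sum_degree :
    #G.orderedTwoPaths = ∑ w, G.degree w * (G.degree w - 1) := by
  rw [card_eq_sum_card_fiberwise (f := fun p => p.2.1) (t := univ) (by simp)]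
  refine sum_congr rfl fun w _ => ?_
  have hfiber : {p ∈ G.orderedTwoPaths | p.2.1 = w} =
      (G.neighborFinset w).offDiag.image fun q => (q.1, w, q.2) := by
    ext ⟨u, w', v⟩
    simp only [orderedTwoPaths, mem_filter, mem_univ, true_and, mem_image, mem_offDiag,
      mem_neighborFinset, Prod.mk.injEq, Prod.exists]
    grind
  rw [hfiber, card_image_of_injective _ fun q r h => by simp_all [Prod.ext_iff], offDiag_card,
    card_neighborFinset_eq_degree, Nat.mul_sub_one]

lemma card_orderedTwoPaths_eq_sum_card_commonNeighborFinset :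
    #G.orderedTwoPaths = ∑ q ∈ univ.offDiag, #(G.commonNeighborFinset q.1 q.2) := by
  rw [card_eq_sum_card_fiberwise (f := fun p => (p.1, p.2.2)) (t := univ.offDiag)
    (by intro p; simp +contextual [orderedTwoPaths])]
  refine sum_congr rfl fun ⟨a, b⟩ _ => ?_
  have hfiber : {p ∈ G.orderedTwoPaths | (p.1, p.2.2) = (a, b)} =
      (G.commonNeighborFinset a b).image fun w => (a, w, b) := by
    ext ⟨u, w, v⟩
    simp only [orderedTwoPaths, mem_filter, mem_univ, true_and, mem_image,
      mem_commonNeighborFinset, Prod.mk.injEq]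
    grind [SimpleGraph.adj_comm]
  rw [hfiber, card_image_of_injective _ fun w w' h => by simp_all]

variable {G}

lemma erase_erase_insert_insert_of_subset_commonNeighborFinset {u v : V} {p : Finset V}
    (huv : u ≠ v) (hp : p ⊆ G.commonNeighborFinset u v) :
    ((insert u (insert v p)).erase u).erase v = p := by
  have hu : u ∉ p := fun h => (mem_commonNeighborFinset.mp (hp h)).1.ne rfl
  have hv : v ∉ p := fun h => (mem_commonNeighborFinset.mp (hp h)).2.ne rfl
  rw [erase_insert (by simp [huv, hu]), erase_insert hv]

lemma isFourCycle_insert_insert {u v : V} {p : Finset V} (huv : u ≠ v)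
    (hp : p ⊆ G.commonNeighborFinset u v) (hp2 : #p = 2) :
    IsFourCycle G (insert u (insert v p)) := by
  obtain ⟨w, w', hww', rfl⟩ := card_eq_two.mp hp2
  simp only [insert_subset_iff, singleton_subset_iff, mem_commonNeighborFinset] at hp
  obtain ⟨⟨huw, hvw⟩, huw', hvw'⟩ := hp
  refine ⟨u, w, v, w', huw.ne, huv, huw'.ne, hvw.ne.symm, hww', hvw'.ne, ?_,
    huw, hvw.symm, hvw', huw'.symm⟩
  rw [insert_comm v w]

variable (G)

lemma sum_choose_two_card_commonNeighborFinset_le :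
    ∑ q ∈ univ.offDiag, (#(G.commonNeighborFinset q.1 q.2)).choose 2 ≤
      16 * Nat.card {s : Finset V // IsFourCycle G s} := by
  classical
  set S := univ.offDiag.sigma fun q : V × V => (G.commonNeighborFinset q.1 q.2).powersetCard 2
  set C : Finset (Finset V) := {s | IsFourCycle G s}
  have hS : #S = ∑ q ∈ univ.offDiag, (#(G.commonNeighborFinset q.1 q.2)).choose 2 := by
    simp only [S, card_sigma, card_powersetCard]
  have hC :
      #(C.sigma fun s => s ×ˢ s) = 16 * Nat.card {s : Finset V // IsFourCycle G s} := by
    rw [card_sigma, Nat.card_eq_fintype_card, Fintype.card_subtype, mul_comm, ← smul_eq_mul,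
      ← sum_const]
    refine sum_congr rfl fun s hs => ?_
    rw [card_product, (mem_filter.mp hs).2.card_eq_four]
  have hmemS {u v : V} {p : Finset V} (hx : ⟨(u, v), p⟩ ∈ S) :
      u ≠ v ∧ p ⊆ G.commonNeighborFinset u v ∧ #p = 2 := by
    simpa [S] using hx
  rw [← hS, ← hC]
  refine card_le_card_of_injOn (fun x => ⟨insert x.1.1 (insert x.1.2 x.2), x.1⟩) ?_ ?_
  · rintro ⟨⟨u, v⟩, p⟩ hx
    obtain ⟨huv, hp, hp2⟩ := hmemS hx
    simp [C, isFourCycle_insert_insert huv hp hp2]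
  · rintro ⟨⟨u, v⟩, p⟩ hx ⟨⟨u', v'⟩, p'⟩ hy hxy
    simp only [Sigma.mk.injEq, heq_eq_eq, Prod.mk.injEq] at hxy
    obtain ⟨hset, rfl, rfl⟩ := hxy
    obtain ⟨huv, hp, -⟩ := hmemS hx
    obtain ⟨-, hp', -⟩ := hmemS hy
    refine Sigma.ext rfl (heq_of_eq ?_)
    rw [← erase_erase_insert_insert_of_subset_commonNeighborFinset huv hp, hset,
      erase_erase_insert_insert_of_subset_commonNeighborFinset huv hp']

end SimpleGraph

/-- The number of ordered 2-paths `(u, w, v)` (with `u ≠ v` and `w` adjacent to both)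
equals `Σ_w deg(w)·(deg(w) − 1)`, and is at most `n(n−1) + 16·t` where `t` is the number
of 4-cycles. -/
theorem ordered_two_paths_eq_and_le {V : Type*} [Fintype V] [DecidableEq V]
    (G : SimpleGraph V) [DecidableRel G.Adj] :
    Nat.card {p : V × V × V // p.1 ≠ p.2.2 ∧ G.Adj p.2.1 p.1 ∧ G.Adj p.2.1 p.2.2} =
        ∑ w : V, G.degree w * (G.degree w - 1) ∧
      ∑ w : V, G.degree w * (G.degree w - 1) ≤
        Fintype.card V * (Fintype.card V - 1) +
          16 * Nat.card {s : Finset V // IsFourCycle G s} := by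
  rw [Nat.card_eq_fintype_card, Fintype.card_subtype]
  refine ⟨G.card_orderedTwoPaths_eq_sum_degree, ?_⟩
  rw [← G.card_orderedTwoPaths_eq_sum_degree,
    G.card_orderedTwoPaths_eq_sum_card_commonNeighborFinset]
  calc ∑ q ∈ univ.offDiag, #(G.commonNeighborFinset q.1 q.2)
      ≤ ∑ q ∈ univ.offDiag, (1 + (#(G.commonNeighborFinset q.1 q.2)).choose 2) :=
        sum_le_sum fun q _ => Nat.le_one_add_choose_two _
    _ = #(univ : Finset V).offDiag +
        ∑ q ∈ univ.offDiag, (#(G.commonNeighborFinset q.1 q.2)).choose 2 := by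
        rw [sum_add_distrib, sum_const, smul_eq_mul, mul_one]
    _ ≤ Fintype.card V * (Fintype.card V - 1) +
          16 * Nat.card {s : Finset V // IsFourCycle G s} :=
        add_le_add (by rw [offDiag_card, card_univ, Nat.mul_sub_one])
          (G.sum_choose_two_card_commonNeighborFinset_le)
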